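/- Let F be the n-point discrete Fourier transform matrix and Λ = diag(F p) the diagonalization of a circulant matrix C = F* Λ F. If the diagonal vector λ admits a decomposition λ = Σ_{k=1}^R u₁^{(k)} ⊗ u₂^{(k)} as a Kronecker/tensor product of vectors in 2D, and x = Σ_{j=1}^S x₁^{(j)} ⊗ x₂^{(j)}, then (F₁* ⊗ F₂*) diag(λ) (F₁ ⊗ F₂) x = Σ_{k=1}^R Σ_{j=1}^S F₁*(u₁^{(k)} ⊙ F₁x₁^{(j)}) ⊗ F₂*(u₂^{(k)} ⊙ F₂x₂^{(j)}), where ⊙ is the Hadamard (entrywise) product. -/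
import Mathlib


open Kronecker Matrix

private lemma sum6 {α₁ α₂ α₃ α₄ α₅ α₆ M : Type*} [Fintype α₁] [Fintype α₂] [Fintype α₃]
    [Fintype α₄] [Fintype α₅] [Fintype α₆] [AddCommMonoid M]
    (f : α₁ → α₂ → α₃ → α₄ → α₅ → α₆ → M) :
    ∑ a, ∑ b, ∑ c, ∑ d, ∑ e, ∑ k, f a b c d e k
      = ∑ k, ∑ c, ∑ e, ∑ b, ∑ d, ∑ a, f a b c d e k := by
  conv_lhs => enter [2, a, 2, b, 2, c, 2, d]; rw [Finset.sum_comm]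
  conv_lhs => enter [2, a, 2, b, 2, c]; rw [Finset.sum_comm]
  conv_lhs => enter [2, a, 2, b]; rw [Finset.sum_comm]
  conv_lhs => enter [2, a]; rw [Finset.sum_comm]
  rw [Finset.sum_comm]
  conv_lhs => enter [2, k, 2, a]; rw [Finset.sum_comm]
  conv_lhs => enter [2, k]; rw [Finset.sum_comm]
  conv_lhs => enter [2, k, 2, c, 2, a, 2, b]; rw [Finset.sum_comm]
  conv_lhs => enter [2, k, 2, c, 2, a]; rw [Finset.sum_comm]
  conv_lhs => enter [2, k, 2, c]; rw [Finset.sum_comm]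
  conv_lhs => enter [2, k, 2, c, 2, e]; rw [Finset.sum_comm]
  conv_lhs => enter [2, k, 2, c, 2, e, 2, b]; rw [Finset.sum_comm]

/-- Factored matrix–vector multiplication through the Fourier basis: if
`diag`-vector `λ = Σ_k u₁^{(k)} ⊗ u₂^{(k)}` and `x = Σ_j x₁^{(j)} ⊗ x₂^{(j)}`, then for
unitary DFT matrices `F₁, F₂`,
`(F₁* ⊗ F₂*) diag(λ) (F₁ ⊗ F₂) x
  = Σ_k Σ_j F₁*(u₁^{(k)} ⊙ F₁x₁^{(j)}) ⊗ F₂*(u₂^{(k)} ⊙ F₂x₂^{(j)})`,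
where `⊙` is the entrywise (Hadamard) product. -/
theorem stmt_13 (n₁ n₂ R S : ℕ)
    (F₁ : Matrix (Fin n₁) (Fin n₁) ℂ) (F₂ : Matrix (Fin n₂) (Fin n₂) ℂ)
    (hF₁ : F₁ ∈ Matrix.unitaryGroup (Fin n₁) ℂ)
    (hF₂ : F₂ ∈ Matrix.unitaryGroup (Fin n₂) ℂ)
    (u₁ : Fin R → Fin n₁ → ℂ) (u₂ : Fin R → Fin n₂ → ℂ)
    (x₁ : Fin S → Fin n₁ → ℂ) (x₂ : Fin S → Fin n₂ → ℂ) :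
    ((F₁ᴴ ⊗ₖ F₂ᴴ) * Matrix.diagonal
        (fun p : Fin n₁ × Fin n₂ => ∑ k : Fin R, u₁ k p.1 * u₂ k p.2) *
      (F₁ ⊗ₖ F₂)).mulVec (fun p : Fin n₁ × Fin n₂ => ∑ j : Fin S, x₁ j p.1 * x₂ j p.2)
    = fun p : Fin n₁ × Fin n₂ =>
        ∑ k : Fin R, ∑ j : Fin S,
          F₁ᴴ.mulVec (fun i => u₁ k i * F₁.mulVec (x₁ j) i) p.1 *
          F₂ᴴ.mulVec (fun i => u₂ k i * F₂.mulVec (x₂ j) i) p.2 := by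
  funext p
  simp only [Matrix.mul_assoc, Matrix.mulVec, Matrix.mul_apply, dotProduct,
    Matrix.diagonal_apply, Matrix.kroneckerMap_apply, Fintype.sum_prod_type,
    Prod.mk.injEq, ite_and, ite_mul, zero_mul, mul_ite, mul_zero,
    Finset.sum_ite_eq, Finset.sum_ite_eq', Finset.mem_univ, if_true,
    Finset.mul_sum, Finset.sum_mul]
  rw [sum6]
  refine Finset.sum_congr rfl fun k _ => Finset.sum_congr rfl fun j _ =>
    Finset.sum_congr rfl fun a _ => Finset.sum_congr rfl fun b _ =>
    Finset.sum_congr rfl fun c _ => Finset.sum_congr rfl fun d _ => by ring
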